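/- If (I², Λ) is a spectral pair in ℝ², then either Λ = {(α + m, β_m + n) : m, n ∈ ℤ} for some α ∈ ℝ and some sequence (β_m) ⊂ [0,1), or Λ = {(β_n + m, α + n) : m, n ∈ ℤ} for some α ∈ ℝ and some sequence (β_n) ⊂ [0,1). -/

import Mathlib

open MeasureTheory Complex Set

/-- The exponential `e_λ(x) = e^{i2πλ·x}` on `ℝ²`. -/
noncomputable def expChar2 (l x : ℝ × ℝ) : ℂ :=
  Complex.exp (2 * Real.pi * Complex.I * ((l.1 * x.1 + l.2 * x.2 : ℝ) : ℂ))

/-- `(μ, (e_l)_{l ∈ Λ})` is a spectral family: the exponentials indexed by `Λ` are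
pairwise orthogonal and total in `L²(μ)`. -/
def IsSpectralFamily {α ι : Type*} [MeasurableSpace α] (μ : Measure α)
    (e : ι → α → ℂ) (Λ : Set ι) : Prop :=
  (∀ l ∈ Λ, ∀ l' ∈ Λ, l ≠ l' → ∫ x, (starRingEnd ℂ) (e l x) * e l' x ∂μ = 0) ∧
  ∀ f : α → ℂ, MemLp f 2 μ →
    (∀ l ∈ Λ, ∫ x, (starRingEnd ℂ) (e l x) * f x ∂μ = 0) → f =ᵐ[μ] 0

/-- The unit square `[0,1)²`. -/
def unitSquare : Set (ℝ × ℝ) := Set.Ico (0 : ℝ) 1 ×ˢ Set.Ico (0 : ℝ) 1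

/-! ### Auxiliary definitions and lemmas -/

/-- The one-dimensional building block `∫_0^1 e^{2πi a t} dt`. -/
noncomputable def F1 (a : ℝ) : ℂ :=
  ∫ t in Set.Ico (0:ℝ) 1, Complex.exp (2 * Real.pi * Complex.I * ((a * t : ℝ) : ℂ))

/-- `a` is an integer. -/
def Zd (a : ℝ) : Prop := ∃ n : ℤ, a = (n : ℝ)

lemma zd_zero : Zd 0 := ⟨0, by norm_num⟩

lemma zd_add {x y : ℝ} (hx : Zd x) (hy : Zd y) : Zd (x + y) := by
  obtain ⟨n, rfl⟩ := hx; obtain ⟨m, rfl⟩ := hy; exact ⟨n + m, by push_cast; ring⟩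

lemma zd_symm {x y : ℝ} (hx : Zd (x - y)) : Zd (y - x) := by
  obtain ⟨n, hn⟩ := hx; exact ⟨-n, by push_cast; linarith⟩

lemma zd_trans {x y z : ℝ} (h1 : Zd (x - y)) (h2 : Zd (y - z)) : Zd (x - z) :=
  sub_add_sub_cancel x y z ▸ zd_add h1 h2

lemma F1_eq_zero_iff (a : ℝ) : F1 a = 0 ↔ (a ≠ 0 ∧ Zd a) := by
  have harg : ∀ t : ℝ, (2 * Real.pi * Complex.I * ((a * t : ℝ) : ℂ)) =
      (2 * Real.pi * Complex.I * a) * t := by intro t; push_cast; ring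
  have hconv : F1 a = ∫ t in (0:ℝ)..1, Complex.exp ((2 * Real.pi * Complex.I * a) * t) := by
    rw [F1]
    simp only [harg]
    rw [intervalIntegral.integral_of_le (by norm_num), integral_Ico_eq_integral_Ioo,
      integral_Ioc_eq_integral_Ioo]
  by_cases ha : a = 0
  · subst ha
    simp only [hconv]
    norm_num
  · have h2pi : (2 * Real.pi * Complex.I : ℂ) ≠ 0 := by
      simp [Real.pi_ne_zero, Complex.I_ne_zero, Complex.ofReal_eq_zero]
    have hc : (2 * Real.pi * Complex.I * a : ℂ) ≠ 0 :=
      mul_ne_zero h2pi (Complex.ofReal_ne_zero.2 ha)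
    have heq : F1 a = (Complex.exp (2 * Real.pi * Complex.I * a) - 1) /
        (2 * Real.pi * Complex.I * a) := by
      rw [hconv, integral_exp_mul_complex hc]
      norm_num
    rw [heq, div_eq_zero_iff, sub_eq_zero]
    have hcc : ¬ (2 * Real.pi * Complex.I * a = 0) := hc
    simp only [hcc, or_false]
    rw [Complex.exp_eq_one_iff]
    constructor
    · rintro ⟨n, hn⟩
      refine ⟨ha, n, ?_⟩
      have h1 : (2 * Real.pi * Complex.I) * a = (2 * Real.pi * Complex.I) * n := by
        rw [hn]; ring
      have := mul_left_cancel₀ h2pi h1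
      exact_mod_cast this
    · rintro ⟨-, n, hn⟩
      exact ⟨n, by rw [hn]; push_cast; ring⟩

lemma measure_sq : (volume.restrict unitSquare : Measure (ℝ × ℝ)) =
    (volume.restrict (Set.Ico (0:ℝ) 1)).prod (volume.restrict (Set.Ico (0:ℝ) 1)) := by
  rw [Measure.prod_restrict, unitSquare, Measure.volume_eq_prod]

lemma inner_expChar (l l' : ℝ × ℝ) :
    ∫ x, (starRingEnd ℂ) (expChar2 l x) * expChar2 l' x ∂(volume.restrict unitSquare)
      = F1 (l'.1 - l.1) * F1 (l'.2 - l.2) := by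
  have hpt : ∀ x : ℝ × ℝ, (starRingEnd ℂ) (expChar2 l x) * expChar2 l' x =
      Complex.exp (2*Real.pi*Complex.I*(((l'.1-l.1) * x.1 : ℝ):ℂ)) *
      Complex.exp (2*Real.pi*Complex.I*(((l'.2-l.2) * x.2 : ℝ):ℂ)) := by
    intro x
    rw [expChar2, expChar2, ← Complex.exp_conj, ← Complex.exp_add, ← Complex.exp_add]
    congr 1
    simp only [map_mul, Complex.conj_ofReal, Complex.conj_I, map_ofNat]
    push_cast
    ring
  simp only [hpt, measure_sq]
  exact integral_prod_mul (L := ℂ)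
    (fun t => Complex.exp (2*Real.pi*Complex.I*(((l'.1-l.1) * t : ℝ):ℂ)))
    (fun t => Complex.exp (2*Real.pi*Complex.I*(((l'.2-l.2) * t : ℝ):ℂ)))

lemma vol_sq : (volume : Measure (ℝ × ℝ)) unitSquare = 1 := by
  rw [unitSquare, Measure.volume_eq_prod, Measure.prod_prod, Real.volume_Ico]
  norm_num

instance : IsFiniteMeasure (volume.restrict unitSquare : Measure (ℝ × ℝ)) :=
  ⟨by rw [Measure.restrict_apply_univ, vol_sq]; norm_num⟩

lemma memℒp_expChar (p : ℝ × ℝ) : MemLp (expChar2 p) 2 (volume.restrict unitSquare) := by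
  refine MemLp.of_bound ?_ 1 (ae_of_all _ fun x => ?_)
  · apply Continuous.aestronglyMeasurable
    unfold expChar2
    fun_prop
  · rw [expChar2, Complex.norm_exp]
    have hre : (2 * Real.pi * Complex.I * ((p.1 * x.1 + p.2 * x.2 : ℝ) : ℂ)).re = 0 := by
      simp
    rw [hre, Real.exp_zero]

lemma expChar_not_ae_zero (p : ℝ × ℝ) :
    ¬ (expChar2 p =ᵐ[volume.restrict unitSquare] (0 : (ℝ × ℝ) → ℂ)) := by
  intro hzero
  have h1 : ∀ᵐ x ∂(volume.restrict unitSquare), False :=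
    hzero.mono fun x hx => Complex.exp_ne_zero _ hx
  have h2 := ae_iff.mp h1
  simp only [not_false_iff, Set.setOf_true, Measure.restrict_apply_univ] at h2
  rw [vol_sq] at h2
  norm_num at h2

/-- Maximality: a point orthogonal to everything in `Λ` (except possibly itself)
must belong to `Λ`. -/
lemma mem_of_orth {Λ : Set (ℝ × ℝ)}
    (h : IsSpectralFamily (volume.restrict unitSquare) expChar2 Λ) (p : ℝ × ℝ)
    (hp : ∀ μ ∈ Λ, μ ≠ p → F1 (p.1 - μ.1) * F1 (p.2 - μ.2) = 0) : p ∈ Λ := by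
  by_contra hpn
  refine expChar_not_ae_zero p (h.2 _ (memℒp_expChar p) ?_)
  intro μ hμ
  rw [inner_expChar]
  exact hp μ hμ (fun e => hpn (e ▸ hμ))

/-- Orthogonality consequence: distinct spectrum points differ by a nonzero
integer in one of the coordinates. -/
lemma orth_cons {Λ : Set (ℝ × ℝ)}
    (h : IsSpectralFamily (volume.restrict unitSquare) expChar2 Λ) :
    ∀ l ∈ Λ, ∀ l' ∈ Λ, l ≠ l' →
      (l'.1 - l.1 ≠ 0 ∧ Zd (l'.1 - l.1)) ∨ (l'.2 - l.2 ≠ 0 ∧ Zd (l'.2 - l.2)) := by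
  intro l hl l' hl' hne
  have h0 := h.1 l hl l' hl' hne
  rw [inner_expChar] at h0
  rcases mul_eq_zero.mp h0 with h1 | h1
  · exact Or.inl ((F1_eq_zero_iff _).mp h1)
  · exact Or.inr ((F1_eq_zero_iff _).mp h1)

/-- Any spectrum `Λ` for the unit square `I²` is of one of the two forms
`{(α + m, β_m + n)}` or `{(β_n + m, α + n)}` with `α ∈ ℝ` and `β : ℤ → [0,1)`. -/
theorem stmt4 (Λ : Set (ℝ × ℝ))
    (h : IsSpectralFamily (volume.restrict unitSquare) expChar2 Λ) :
    (∃ α : ℝ, ∃ β : ℤ → ℝ, (∀ m, β m ∈ Set.Ico (0 : ℝ) 1) ∧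
        Λ = {p : ℝ × ℝ | ∃ m n : ℤ, p = (α + m, β m + n)}) ∨
    (∃ α : ℝ, ∃ β : ℤ → ℝ, (∀ n, β n ∈ Set.Ico (0 : ℝ) 1) ∧
        Λ = {p : ℝ × ℝ | ∃ m n : ℤ, p = (β n + m, α + n)}) := by
  have key_mem : ∀ p : ℝ × ℝ,
      (∀ μ ∈ Λ, μ ≠ p → F1 (p.1 - μ.1) * F1 (p.2 - μ.2) = 0) → p ∈ Λ :=
    fun p hp => mem_of_orth h p hp
  have orth := orth_cons h
  have horth' : ∀ l ∈ Λ, ∀ l' ∈ Λ, Zd (l'.1 - l.1) ∨ Zd (l'.2 - l.2) := by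
    intro l hl l' hl'
    by_cases e : l = l'
    · subst e; exact Or.inl (by rw [sub_self]; exact zd_zero)
    · rcases orth l hl l' hl' e with ⟨-, hz⟩ | ⟨-, hz⟩
      · exact Or.inl hz
      · exact Or.inr hz
  have hne : ∃ l₀, l₀ ∈ Λ := by
    by_contra hc
    push_neg at hc
    exact hc _ (key_mem (0, 0) (fun μ hμ _ => absurd hμ (hc μ)))
  obtain ⟨l₀, hl₀⟩ := hne
  -- Dichotomy: all first-coordinate differences integral, or all second.
  have hdich : (∀ l ∈ Λ, ∀ l' ∈ Λ, Zd (l'.1 - l.1)) ∨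
      (∀ l ∈ Λ, ∀ l' ∈ Λ, Zd (l'.2 - l.2)) := by
    by_contra hcon
    push_neg at hcon
    obtain ⟨⟨a, ha, b, hb, hab⟩, ⟨c, hcm, d, hd, hcd⟩⟩ := hcon
    have hba2 : Zd (b.2 - a.2) := by
      rcases horth' a ha b hb with hz | hz
      · exact absurd hz hab
      · exact hz
    have hdc1 : Zd (d.1 - c.1) := by
      rcases horth' c hcm d hd with hz | hz
      · exact hz
      · exact absurd hz hcd
    rcases horth' a ha c hcm with h1 | h2
    · -- Zd (c.1 - a.1)
      have hbc1 : ¬ Zd (b.1 - c.1) := fun hx => hab (zd_trans hx h1)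
      have hcb2 : Zd (c.2 - b.2) := by
        rcases horth' b hb c hcm with hz | hz
        · exact absurd (zd_symm hz) hbc1
        · exact hz
      have hca2 : Zd (c.2 - a.2) := zd_trans hcb2 hba2
      have hda2 : ¬ Zd (d.2 - a.2) := fun hx => hcd (zd_trans hx (zd_symm hca2))
      have hdb2 : ¬ Zd (d.2 - b.2) := fun hx => hda2 (zd_trans hx hba2)
      have hdb1 : ¬ Zd (d.1 - b.1) := fun hx => hbc1 (zd_trans (zd_symm hx) hdc1)
      rcases horth' b hb d hd with hz | hz
      · exact hdb1 hz
      · exact hdb2 hz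
    · -- Zd (c.2 - a.2)
      have hda2 : ¬ Zd (d.2 - a.2) := fun hx => hcd (zd_trans hx (zd_symm h2))
      have hda1 : Zd (d.1 - a.1) := by
        rcases horth' a ha d hd with hz | hz
        · exact hz
        · exact absurd hz hda2
      have hdb2 : ¬ Zd (d.2 - b.2) := fun hx => hda2 (zd_trans hx hba2)
      have hdb1 : Zd (d.1 - b.1) := by
        rcases horth' b hb d hd with hz | hz
        · exact hz
        · exact absurd hz hdb2
      exact hab (zd_trans (zd_symm hdb1) hda1)
  rcases hdich with hA | hB
  · -- Case A: first coordinates lie in α + ℤ.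
    left
    set α := l₀.1 with hα
    -- every column is nonempty
    have col_ne : ∀ m : ℤ, ∃ t : ℝ, ((α + m : ℝ), t) ∈ Λ := by
      intro m
      by_contra hc
      push_neg at hc
      refine hc 0 (key_mem ((α + m : ℝ), (0:ℝ)) ?_)
      intro μ hμ hne'
      obtain ⟨k, hk⟩ := hA l₀ hl₀ μ hμ
      have hμ1 : μ.1 ≠ α + m := by
        intro e
        exact hc μ.2 (by rw [← e]; exact hμ)
      apply mul_eq_zero_of_left
      rw [F1_eq_zero_iff]
      refine ⟨sub_ne_zero.2 (fun e => hμ1 e.symm), ⟨m - k, ?_⟩⟩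
      push_cast
      linarith
    choose γ hγ using col_ne
    set β : ℤ → ℝ := fun m => Int.fract (γ m) with hβdef
    have hβ : ∀ m, β m ∈ Set.Ico (0:ℝ) 1 := fun m => ⟨Int.fract_nonneg _, Int.fract_lt_one _⟩
    have hfract : ∀ m : ℤ, β m = γ m - ⌊γ m⌋ := fun m => rfl
    -- within a column, second coordinates differ by integers from γ m
    have col_sub : ∀ m : ℤ, ∀ t : ℝ, ((α + m : ℝ), t) ∈ Λ → Zd (t - γ m) := by
      intro m t ht
      by_cases e : t = γ m
      · rw [e, sub_self]; exact zd_zero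
      · have hne2 : ((α + m : ℝ), γ m) ≠ ((α + m : ℝ), t) := by
          intro pe
          exact e (congrArg Prod.snd pe).symm
        rcases orth _ (hγ m) _ ht hne2 with ⟨hz, -⟩ | ⟨-, hz⟩
        · simp at hz
        · exact hz
    -- all points (α+m, β m + n) belong to Λ
    have mem_col : ∀ m n : ℤ, ((α + m : ℝ), β m + n) ∈ Λ := by
      intro m n
      apply key_mem
      intro μ hμ hne'
      obtain ⟨k, hk⟩ := hA l₀ hl₀ μ hμ
      by_cases e : (k : ℝ) = (m : ℝ)
      · have hμ1 : μ.1 = α + m := by rw [← e]; linarith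
        have h2 : Zd (μ.2 - γ m) := col_sub m μ.2 (by rw [← hμ1]; exact hμ)
        apply mul_eq_zero_of_right
        rw [F1_eq_zero_iff]
        constructor
        · intro e0
          apply hne'
          have h2' : μ.2 = β m + n := by
            have : (β m + n : ℝ) - μ.2 = 0 := e0
            linarith
          exact Prod.ext hμ1 h2'
        · obtain ⟨j, hj⟩ := h2
          refine ⟨n - ⌊γ m⌋ - j, ?_⟩
          have hb := hfract m
          push_cast
          push_cast at hb ⊢
          linarith
      · apply mul_eq_zero_of_left
        rw [F1_eq_zero_iff]
        refine ⟨?_, ⟨m - k, by push_cast; linarith⟩⟩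
        simp only
        intro e0
        apply e
        have : μ.1 = α + k := by linarith
        rw [this] at e0
        linarith
    refine ⟨α, β, hβ, ?_⟩
    ext p
    constructor
    · intro hp
      obtain ⟨m, hm⟩ := hA l₀ hl₀ p hp
      have hp1 : p.1 = α + m := by linarith
      have h2 : Zd (p.2 - γ m) := col_sub m p.2 (by rw [← hp1]; exact hp)
      obtain ⟨j, hj⟩ := h2
      refine ⟨m, j + ⌊γ m⌋, Prod.ext hp1 ?_⟩
      have hb := hfract m
      push_cast at hb ⊢
      linarith
    · rintro ⟨m, n, rfl⟩
      exact mem_col m n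
  · -- Case B: second coordinates lie in α + ℤ.
    right
    set α := l₀.2 with hα
    have col_ne : ∀ n : ℤ, ∃ t : ℝ, (t, (α + n : ℝ)) ∈ Λ := by
      intro n
      by_contra hc
      push_neg at hc
      refine hc 0 (key_mem ((0:ℝ), (α + n : ℝ)) ?_)
      intro μ hμ hne'
      obtain ⟨k, hk⟩ := hB l₀ hl₀ μ hμ
      have hμ2 : μ.2 ≠ α + n := by
        intro e
        exact hc μ.1 (by rw [← e]; exact hμ)
      apply mul_eq_zero_of_right
      rw [F1_eq_zero_iff]
      refine ⟨sub_ne_zero.2 (fun e => hμ2 e.symm), ⟨n - k, ?_⟩⟩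
      push_cast
      linarith
    choose γ hγ using col_ne
    set β : ℤ → ℝ := fun n => Int.fract (γ n) with hβdef
    have hβ : ∀ n, β n ∈ Set.Ico (0:ℝ) 1 := fun n => ⟨Int.fract_nonneg _, Int.fract_lt_one _⟩
    have hfract : ∀ n : ℤ, β n = γ n - ⌊γ n⌋ := fun n => rfl
    have col_sub : ∀ n : ℤ, ∀ t : ℝ, (t, (α + n : ℝ)) ∈ Λ → Zd (t - γ n) := by
      intro n t ht
      by_cases e : t = γ n
      · rw [e, sub_self]; exact zd_zero
      · have hne2 : (γ n, (α + n : ℝ)) ≠ (t, (α + n : ℝ)) := by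
          intro pe
          exact e (congrArg Prod.fst pe).symm
        rcases orth _ (hγ n) _ ht hne2 with ⟨-, hz⟩ | ⟨hz, -⟩
        · exact hz
        · simp at hz
    have mem_col : ∀ m n : ℤ, ((β n + m : ℝ), (α + n : ℝ)) ∈ Λ := by
      intro m n
      apply key_mem
      intro μ hμ hne'
      obtain ⟨k, hk⟩ := hB l₀ hl₀ μ hμ
      by_cases e : (k : ℝ) = (n : ℝ)
      · have hμ2 : μ.2 = α + n := by rw [← e]; linarith
        have h2 : Zd (μ.1 - γ n) := col_sub n μ.1 (by rw [← hμ2]; exact hμ)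
        apply mul_eq_zero_of_left
        rw [F1_eq_zero_iff]
        constructor
        · intro e0
          apply hne'
          have h1' : μ.1 = β n + m := by
            have : (β n + m : ℝ) - μ.1 = 0 := e0
            linarith
          exact Prod.ext h1' hμ2
        · obtain ⟨j, hj⟩ := h2
          refine ⟨m - ⌊γ n⌋ - j, ?_⟩
          have hb := hfract n
          push_cast
          push_cast at hb ⊢
          linarith
      · apply mul_eq_zero_of_right
        rw [F1_eq_zero_iff]
        refine ⟨?_, ⟨n - k, by push_cast; linarith⟩⟩
        simp only
        intro e0
        apply e
        have : μ.2 = α + k := by linarith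
        rw [this] at e0
        linarith
    refine ⟨α, β, hβ, ?_⟩
    ext p
    constructor
    · intro hp
      obtain ⟨n, hn⟩ := hB l₀ hl₀ p hp
      have hp2 : p.2 = α + n := by linarith
      have h2 : Zd (p.1 - γ n) := col_sub n p.1 (by rw [← hp2]; exact hp)
      obtain ⟨j, hj⟩ := h2
      refine ⟨j + ⌊γ n⌋, n, Prod.ext ?_ hp2⟩
      have hb := hfract n
      push_cast at hb ⊢
      linarith
    · rintro ⟨m, n, rfl⟩
      exact mem_col m n
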